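/- Every maximal outerplanar graph G on n ≥ 6 vertices satisfies 4 ≤ mp(G) ≤ n − 1. -/

import Mathlib

/-!
Number the vertices along the Hamiltonian cycle, so that `G` is a triangulation of the polygon
`0, 1, …, n - 1`. The non-crossing edges inside an interval `[a, b]` number at most
`2 (b - a) - 1`, with equality exactly when `[a, b]` spans a triangulated sub-polygon; for
`b ≥ a + 2` such a sub-polygon splits at the apex `t` of the triangle on `(a, b)` into the
triangulated sub-polygons `[a, t]` and `[t, b]`.

Descending along apexes gives a vertex of degree 2 (one touched by no chord) strictly inside
every sub-polygon with `b ≥ a + 2`, hence one on each side of the apex `t` over `(0, n - 1)`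
(if a side is a single polygon edge, say `t = 1`, then `0` itself has degree 2). The descent
also shows that the two polygon neighbours of a degree-2 vertex are joined by a chord, so no two
degree-2 vertices are adjacent. A degree-monotone path through all `n` vertices would contain
two degree-2 vertices, and then every vertex between them would also have degree 2, giving two
adjacent ones: so `mp G ≤ n - 1`.

For `n ≥ 6` one side of the apex over `(0, n - 1)` is cut off by a chord and has at least four
vertices. Descending to a minimal such sub-polygon leaves a quadrilateral (triangulated either
way) or a pentagon fanned from its middle vertex, and these carry paths with degrees
`2, 3, ≥ 3, ≥ 3` and `2, 4, ≥ 4, ≥ 4`.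
-/

open SimpleGraph

/-- Degree of a vertex (as `ncard` of the neighbor set, avoiding decidability). -/
noncomputable def gdeg {V : Type*} (G : SimpleGraph V) (v : V) : ℕ := (G.neighborSet v).ncard

/-- A walk is degree-monotone if the degrees along its support are monotone. -/
def DegMonotone {V : Type*} (G : SimpleGraph V) {u v : V} (p : G.Walk u v) : Prop :=
  List.Chain' (· ≤ ·) (p.support.map (gdeg G)) ∨
  List.Chain' (fun a b => b ≤ a) (p.support.map (gdeg G))

/-- `mp G`: the maximum number of vertices on a degree-monotone path of `G`. -/
noncomputable def mp {V : Type*} [Fintype V] (G : SimpleGraph V) : ℕ :=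
  sSup {n | ∃ (u v : V) (p : G.Walk u v), p.IsPath ∧ DegMonotone G p ∧ p.support.length = n}

/-- `IsMOP G`: `G` on `Fin n` is a triangulated polygon on the Hamiltonian cycle
`0 - 1 - ⋯ - (n-1) - 0`: it contains all cycle edges, no two of its edges cross,
and it has `2n - 3` edges (so all its inner faces are triangles). Every maximal
outerplanar graph on `n ≥ 3` vertices is isomorphic to such a graph. -/
structure IsMOP {n : ℕ} (G : SimpleGraph (Fin n)) : Prop where
  three_le : 3 ≤ n
  cycle : ∀ i j : Fin n, (j : ℕ) = ((i : ℕ) + 1) % n → G.Adj i j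
  noncross : ∀ a b c d : Fin n, a < b → b < c → c < d → G.Adj a c → G.Adj b d → False
  card_edges : G.edgeSet.ncard = 2 * n - 3

open Finset

/-- A triangulation of the convex polygon with vertices `0, 1, …, n - 1`: an edge is a pair
`(p, q)` with `p < q`, all sides (including `(0, n - 1)`) are edges, no two edges cross, and there
are `2n - 3` edges. -/
structure PolygonTriangulation (n : ℕ) where
  edges : Finset (ℕ × ℕ)
  three_le : 3 ≤ n
  lt_of_mem : ∀ e ∈ edges, e.1 < e.2 ∧ e.2 < n
  succ_mem : ∀ i, i + 1 < n → (i, i + 1) ∈ edges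
  zero_last_mem : (0, n - 1) ∈ edges
  noncross : ∀ e ∈ edges, ∀ f ∈ edges, ¬(e.1 < f.1 ∧ f.1 < e.2 ∧ e.2 < f.2)
  card_edges : #edges + 3 = 2 * n

namespace PolygonTriangulation

variable {n : ℕ} (T : PolygonTriangulation n)

def deg (x : ℕ) : ℕ := #{e ∈ T.edges | e.1 = x ∨ e.2 = x}

def Adj (x y : ℕ) : Prop := (x, y) ∈ T.edges ∨ (y, x) ∈ T.edges

def chords : Finset (ℕ × ℕ) := {e ∈ T.edges | e.1 + 2 ≤ e.2 ∧ ¬(e.1 = 0 ∧ e.2 + 1 = n)}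

def edgesIn (a b : ℕ) : Finset (ℕ × ℕ) := {e ∈ T.edges | a ≤ e.1 ∧ e.2 ≤ b}

/-- The sub-polygon `a, a + 1, …, b` carries the maximal number `2 (b - a) - 1` of edges
(`card_edgesIn_le`): it is triangulated. -/
def IsTriangulatedOn (a b : ℕ) : Prop := a < b ∧ #(T.edgesIn a b) + 1 = 2 * (b - a)

variable {T}

lemma mk_mem_chords {a b : ℕ} :
    (a, b) ∈ T.chords ↔ (a, b) ∈ T.edges ∧ a + 2 ≤ b ∧ ¬(a = 0 ∧ b + 1 = n) := by
  simp [chords]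

lemma mk_mem_edgesIn {a b p q : ℕ} : (p, q) ∈ T.edgesIn a b ↔ (p, q) ∈ T.edges ∧ a ≤ p ∧ q ≤ b := by
  simp [edgesIn]

lemma lt_of_mk_mem {a b : ℕ} (h : (a, b) ∈ T.edges) : a < b ∧ b < n := T.lt_of_mem _ h

lemma mem_edges_of_side {a b : ℕ} (h : (b = a + 1 ∧ b < n) ∨ (a = 0 ∧ b + 1 = n)) :
    (a, b) ∈ T.edges := by
  rcases h with ⟨rfl, hb⟩ | ⟨rfl, hb⟩
  · exact T.succ_mem a hb
  · obtain rfl : b = n - 1 := by omega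
    exact T.zero_last_mem

lemma deg_eq {x : ℕ} (hx : x < n) : T.deg x = 2 + #{c ∈ T.chords | c.1 = x ∨ c.2 = x} := by
  have hn := T.three_le
  have hsides : #{e ∈ T.edges | (e.1 = x ∨ e.2 = x) ∧ e ∉ T.chords} = 2 := by
    have key : ∀ a b : ℕ, (a, b) ∈ {e ∈ T.edges | (e.1 = x ∨ e.2 = x) ∧ e ∉ T.chords} ↔
        (a = x ∨ b = x) ∧ ((b = a + 1 ∧ b < n) ∨ (a = 0 ∧ b + 1 = n)) := by
      intro a b
      simp only [mem_filter, mk_mem_chords, not_and]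
      constructor
      · rintro ⟨he, ht, hnc⟩
        have := lt_of_mk_mem he
        have := hnc he
        omega
      · rintro ⟨ht, hs⟩
        exact ⟨T.mem_edges_of_side hs, ht, fun _ _ => by omega⟩
    rw [card_eq_two]
    refine ⟨if x = 0 then (0, n - 1) else (x - 1, x), if x + 1 = n then (0, x) else (x, x + 1),
      by split_ifs <;> simp <;> omega, ?_⟩
    ext ⟨a, b⟩
    rw [key]
    split_ifs <;> simp <;> omega
  rw [deg, ← card_filter_add_card_filter_not (s := {e ∈ T.edges | e.1 = x ∨ e.2 = x})
    (· ∈ T.chords), filter_filter, filter_filter, hsides, add_comm]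
  congr 2
  ext e
  simp only [chords, mem_filter]
  tauto

lemma deg_le {x : ℕ} (hx : x < n) {s : Finset (ℕ × ℕ)}
    (h : ∀ c ∈ T.chords, (c.1 = x ∨ c.2 = x) → c ∈ s) : T.deg x ≤ 2 + #s := by
  rw [T.deg_eq hx]
  gcongr
  intro c hc
  rw [mem_filter] at hc
  exact h c hc.1 hc.2

lemma three_le_deg {x : ℕ} {c : ℕ × ℕ} (hc : c ∈ T.chords) (hx : c.1 = x ∨ c.2 = x) :
    3 ≤ T.deg x := by
  have := T.lt_of_mem c (mem_filter.1 hc).1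
  rw [T.deg_eq (by omega)]
  have : 0 < #{c ∈ T.chords | c.1 = x ∨ c.2 = x} := card_pos.2 ⟨c, mem_filter.2 ⟨hc, hx⟩⟩
  omega

lemma four_le_deg {x : ℕ} {c d : ℕ × ℕ} (hcd : c ≠ d) (hc : c ∈ T.chords) (hd : d ∈ T.chords)
    (hcx : c.1 = x ∨ c.2 = x) (hdx : d.1 = x ∨ d.2 = x) : 4 ≤ T.deg x := by
  have := T.lt_of_mem c (mem_filter.1 hc).1
  rw [T.deg_eq (by omega)]
  have : #{c, d} ≤ #{c ∈ T.chords | c.1 = x ∨ c.2 = x} := card_le_card <| by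
    simp only [insert_subset_iff, singleton_subset_iff, mem_filter]
    exact ⟨⟨hc, hcx⟩, hd, hdx⟩
  rw [card_pair hcd] at this
  omega

lemma ne_of_mem_chords_of_deg_eq_two {x : ℕ} (hx : T.deg x = 2) {c : ℕ × ℕ} (hc : c ∈ T.chords) :
    c.1 ≠ x ∧ c.2 ≠ x := by
  constructor <;> rintro rfl
  · have := T.three_le_deg hc (Or.inl rfl); omega
  · have := T.three_le_deg hc (Or.inr rfl); omega

lemma deg_eq_two {x : ℕ} (hx : x < n) (h : ∀ c ∈ T.chords, c.1 ≠ x ∧ c.2 ≠ x) : T.deg x = 2 := by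
  have := T.deg_le hx (s := ∅) fun c hc hcx => by have := h c hc; omega
  rw [T.deg_eq hx] at this ⊢
  simpa using this

lemma deg_succ_eq_two {a : ℕ} (h : (a, a + 2) ∈ T.edges) : T.deg (a + 1) = 2 :=
  T.deg_eq_two (by have := lt_of_mk_mem h; omega) fun ⟨p, q⟩ hc => by
    rw [mk_mem_chords] at hc
    have := T.noncross _ h _ hc.1
    have := T.noncross _ hc.1 _ h
    dsimp only at *
    omega

lemma deg_zero_eq_two (h : (1, n - 1) ∈ T.edges) : T.deg 0 = 2 :=
  T.deg_eq_two (by have := T.three_le; omega) fun ⟨p, q⟩ hc => by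
    rw [mk_mem_chords] at hc
    have := T.noncross _ hc.1 _ h
    have := lt_of_mk_mem hc.1
    dsimp only at *
    omega

lemma deg_last_eq_two (h : (0, n - 2) ∈ T.edges) : T.deg (n - 1) = 2 :=
  T.deg_eq_two (by have := T.three_le; omega) fun ⟨p, q⟩ hc => by
    rw [mk_mem_chords] at hc
    have := T.noncross _ h _ hc.1
    have := lt_of_mk_mem hc.1
    dsimp only at *
    omega

/-- Take `(x, y)` a longest edge inside `[a, b]` other than `(a, b)`: by non-crossing, every other
edge inside `[a, b]` lies inside `[a, x]`, `[x, y]` or `[y, b]`. -/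
lemma exists_longest_split {a b : ℕ} (hne : ((T.edgesIn a b).erase (a, b)).Nonempty) :
    ∃ x y, a ≤ x ∧ x < y ∧ y ≤ b ∧ ¬(x = a ∧ y = b) ∧
      #((T.edgesIn a b).erase (a, b)) ≤ #(T.edgesIn a x) + #(T.edgesIn x y) + #(T.edgesIn y b) := by
  obtain ⟨⟨x, y⟩, hxy, hmax⟩ := exists_max_image _ (fun e : ℕ × ℕ => e.2 - e.1) hne
  rw [mem_erase, mk_mem_edgesIn] at hxy
  obtain ⟨hne, hxyE, hax, hyb⟩ := hxy
  have hlt := lt_of_mk_mem hxyE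
  refine ⟨x, y, hax, hlt.1, hyb, fun h => hne (by rw [h.1, h.2]), ?_⟩
  calc #((T.edgesIn a b).erase (a, b))
      ≤ #(T.edgesIn a x ∪ T.edgesIn x y ∪ T.edgesIn y b) := card_le_card ?_
    _ ≤ _ := (card_union_le _ _).trans (by gcongr; exact card_union_le _ _)
  rintro ⟨p, q⟩ hpq
  have hlen := hmax _ hpq
  rw [mem_erase, mk_mem_edgesIn] at hpq
  have := T.noncross _ hpq.2.1 _ hxyE
  have := T.noncross _ hxyE _ hpq.2.1
  have := lt_of_mk_mem hpq.2.1
  simp only [mem_union, mk_mem_edgesIn, hpq.2.1, true_and]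
  dsimp only at *
  omega

lemma card_edgesIn_le_one_of_erase_eq_empty {a b : ℕ} (h : (T.edgesIn a b).erase (a, b) = ∅) :
    #(T.edgesIn a b) ≤ 1 := by
  have := pred_card_le_card_erase (s := T.edgesIn a b) (a := (a, b))
  rw [h, card_empty] at this
  omega

lemma card_edgesIn_le (a b : ℕ) : #(T.edgesIn a b) ≤ 2 * (b - a) - 1 := by
  induction hm : b - a using Nat.strong_induction_on generalizing a b with
  | _ m ih =>
  rcases ((T.edgesIn a b).erase (a, b)).eq_empty_or_nonempty with hE | hne
  · have := card_edgesIn_le_one_of_erase_eq_empty hE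
    rcases (T.edgesIn a b).eq_empty_or_nonempty with hE' | ⟨⟨p, q⟩, hpq⟩
    · simp [hE']
    · rw [mk_mem_edgesIn] at hpq
      have := lt_of_mk_mem hpq.1
      omega
  · obtain ⟨x, y, hax, hxy, hyb, hne, hsplit⟩ := T.exists_longest_split hne
    have := ih (x - a) (by omega) a x rfl
    have := ih (y - x) (by omega) x y rfl
    have := ih (b - y) (by omega) y b rfl
    have := pred_card_le_card_erase (s := T.edgesIn a b) (a := (a, b))
    omega

lemma IsTriangulatedOn.mem_edges {a b : ℕ} (h : T.IsTriangulatedOn a b) : (a, b) ∈ T.edges := by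
  by_contra hab
  obtain ⟨hlt, hcard⟩ := h
  have herase : (T.edgesIn a b).erase (a, b) = T.edgesIn a b :=
    erase_eq_of_notMem (by simp [mk_mem_edgesIn, hab])
  rcases ((T.edgesIn a b).erase (a, b)).eq_empty_or_nonempty with hE | hne
  · rw [herase] at hE
    rw [hE, card_empty] at hcard
    omega
  · obtain ⟨x, y, hax, hxy, hyb, hne, hsplit⟩ := T.exists_longest_split hne
    have := T.card_edgesIn_le a x
    have := T.card_edgesIn_le x y
    have := T.card_edgesIn_le y b
    rw [herase] at hsplit
    omega

lemma IsTriangulatedOn.exists_apex {a b : ℕ} (h : T.IsTriangulatedOn a b) (hab : a + 2 ≤ b) :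
    ∃ t, a < t ∧ t < b ∧ T.IsTriangulatedOn a t ∧ T.IsTriangulatedOn t b := by
  obtain ⟨-, hcard⟩ := h
  have hpred := pred_card_le_card_erase (s := T.edgesIn a b) (a := (a, b))
  have hne : ((T.edgesIn a b).erase (a, b)).Nonempty := by
    rw [nonempty_iff_ne_empty]
    intro hE
    have := card_edgesIn_le_one_of_erase_eq_empty hE
    omega
  obtain ⟨x, y, hax, hxy, hyb, hne, hsplit⟩ := T.exists_longest_split hne
  have := T.card_edgesIn_le a x
  have := T.card_edgesIn_le x y
  have := T.card_edgesIn_le y b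
  by_cases hxa : x = a
  · subst hxa
    exact ⟨y, hxy, by omega, ⟨hxy, by omega⟩, ⟨by omega, by omega⟩⟩
  · obtain rfl : y = b := by omega
    exact ⟨x, by omega, hxy, ⟨by omega, by omega⟩, ⟨hxy, by omega⟩⟩

lemma isTriangulatedOn_zero_last : T.IsTriangulatedOn 0 (n - 1) := by
  have hn := T.three_le
  have hall : T.edgesIn 0 (n - 1) = T.edges :=
    filter_true_of_mem fun e he => by have := T.lt_of_mem e he; omega
  refine ⟨by omega, ?_⟩
  rw [hall]
  have := T.card_edges
  omega

lemma IsTriangulatedOn.exists_deg_eq_two {a b : ℕ} (h : T.IsTriangulatedOn a b) (hab : a + 2 ≤ b) :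
    ∃ c, a < c ∧ c < b ∧ T.deg c = 2 := by
  induction hm : b - a using Nat.strong_induction_on generalizing a b with
  | _ m ih =>
  obtain ⟨t, hat, htb, hl, hr⟩ := h.exists_apex hab
  by_cases hL : a + 2 ≤ t
  · obtain ⟨c, hac, hct, hc⟩ := ih (t - a) (by omega) hl hL rfl
    exact ⟨c, hac, by omega, hc⟩
  by_cases hR : t + 2 ≤ b
  · obtain ⟨c, htc, hcb, hc⟩ := ih (b - t) (by omega) hr hR rfl
    exact ⟨c, by omega, hcb, hc⟩
  obtain rfl : b = a + 2 := by omega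
  exact ⟨a + 1, by omega, by omega, T.deg_succ_eq_two h.mem_edges⟩

lemma IsTriangulatedOn.mem_edges_of_deg_eq_two {a b c : ℕ} (h : T.IsTriangulatedOn a b)
    (hac : a < c) (hcb : c < b) (hc : T.deg c = 2) : (c - 1, c + 1) ∈ T.edges := by
  induction hm : b - a using Nat.strong_induction_on generalizing a b with
  | _ m ih =>
  obtain ⟨t, hat, htb, hl, hr⟩ := h.exists_apex (by omega)
  rcases lt_trichotomy c t with hct | rfl | htc
  · exact ih (t - a) (by omega) hl hac hct rfl
  · -- `c` is the apex, so `(a, c)` and `(c, b)` are edges; being no chords, they are sides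
    have hbn := (lt_of_mk_mem h.mem_edges).2
    have hleft : a + 1 = c := by
      by_contra hne
      exact (T.ne_of_mem_chords_of_deg_eq_two hc
        (mk_mem_chords.2 ⟨hl.mem_edges, by omega, by omega⟩)).2 rfl
    have hright : c + 1 = b := by
      by_contra hne
      exact (T.ne_of_mem_chords_of_deg_eq_two hc
        (mk_mem_chords.2 ⟨hr.mem_edges, by omega, by omega⟩)).1 rfl
    convert h.mem_edges using 2; omega
  · exact ih (b - t) (by omega) hr htc hcb rfl

lemma mem_edges_of_deg_zero_eq_two (h : T.deg 0 = 2) : (1, n - 1) ∈ T.edges := by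
  have hn := T.three_le
  obtain ⟨t, ht0, htn, hl, hr⟩ := T.isTriangulatedOn_zero_last.exists_apex (by omega)
  obtain rfl : t = 1 := by
    by_contra ht
    exact (T.ne_of_mem_chords_of_deg_eq_two h
      (mk_mem_chords.2 ⟨hl.mem_edges, by omega, by omega⟩)).1 rfl
  exact hr.mem_edges

lemma mem_edges_of_deg_last_eq_two (h : T.deg (n - 1) = 2) : (0, n - 2) ∈ T.edges := by
  have hn := T.three_le
  obtain ⟨t, ht0, htn, hl, hr⟩ := T.isTriangulatedOn_zero_last.exists_apex (by omega)
  obtain rfl : t = n - 2 := by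
    by_contra ht
    exact (T.ne_of_mem_chords_of_deg_eq_two h
      (mk_mem_chords.2 ⟨hr.mem_edges, by omega, by omega⟩)).2 rfl
  exact hl.mem_edges

lemma three_le_deg_of_adj_of_deg_eq_two (hn : 4 ≤ n) {x y : ℕ} (hx : T.deg x = 2)
    (hxy : T.Adj x y) : 3 ≤ T.deg y := by
  have hside : ∀ p q, (p, q) ∈ T.edges → (p = x ∨ q = x) →
      p < q ∧ q < n ∧ (q = p + 1 ∨ (p = 0 ∧ q + 1 = n)) := fun p q he hpx => by
    have := lt_of_mk_mem he
    by_contra hne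
    have := T.ne_of_mem_chords_of_deg_eq_two hx (mk_mem_chords.2 ⟨he, by omega, by omega⟩)
    dsimp only at this
    omega
  have hy : x < n ∧ y < n ∧
      (y + 1 = x ∨ x + 1 = y ∨ (x = 0 ∧ y + 1 = n) ∨ (y = 0 ∧ x + 1 = n)) := by
    rcases hxy with he | he
    · have := hside _ _ he (Or.inl rfl); omega
    · have := hside _ _ he (Or.inr rfl); omega
  by_cases h0 : x = 0
  · subst h0
    exact T.three_le_deg (mk_mem_chords.2 ⟨T.mem_edges_of_deg_zero_eq_two hx, by omega, by omega⟩)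
      (by dsimp only; omega)
  by_cases hlast : x + 1 = n
  · obtain rfl : x = n - 1 := by omega
    exact T.three_le_deg (mk_mem_chords.2 ⟨T.mem_edges_of_deg_last_eq_two hx, by omega, by omega⟩)
      (by dsimp only; omega)
  · have := T.isTriangulatedOn_zero_last.mem_edges_of_deg_eq_two (by omega) (by omega) hx
    exact T.three_le_deg (mk_mem_chords.2 ⟨this, by omega, by omega⟩) (by dsimp only; omega)

lemma exists_two_deg_eq_two : ∃ x y, x < y ∧ y < n ∧ T.deg x = 2 ∧ T.deg y = 2 := by
  have hn := T.three_le
  obtain ⟨t, ht0, htn, hl, hr⟩ := T.isTriangulatedOn_zero_last.exists_apex (by omega)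
  obtain ⟨x, hxt, hx⟩ : ∃ x < t, T.deg x = 2 := by
    by_cases ht : t = 1
    · subst ht
      exact ⟨0, one_pos, T.deg_zero_eq_two hr.mem_edges⟩
    · obtain ⟨x, -, hxt, hx⟩ := hl.exists_deg_eq_two (by omega)
      exact ⟨x, hxt, hx⟩
  obtain ⟨y, hty, hyn, hy⟩ : ∃ y, t < y ∧ y < n ∧ T.deg y = 2 := by
    by_cases ht : t + 2 = n
    · refine ⟨n - 1, by omega, by omega, T.deg_last_eq_two ?_⟩
      convert hl.mem_edges using 2
      omega
    · obtain ⟨y, hty, hyn, hy⟩ := hr.exists_deg_eq_two (by omega)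
      exact ⟨y, hty, by omega, hy⟩
  exact ⟨x, y, by omega, hyn, hx, hy⟩

variable (T) in
def IsDegMonotonePath (a b c d : ℕ) : Prop :=
  T.Adj a b ∧ T.Adj b c ∧ T.Adj c d ∧ a ≠ c ∧ a ≠ d ∧ b ≠ d ∧
    T.deg a ≤ T.deg b ∧ T.deg b ≤ T.deg c ∧ T.deg c ≤ T.deg d

lemma Adj.symm {x y : ℕ} (h : T.Adj x y) : T.Adj y x := Or.symm h

lemma Adj.lt_left {x y : ℕ} (h : T.Adj x y) : x < n := by
  rcases h with h | h <;> have := lt_of_mk_mem h <;> omega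

lemma adj_succ {x : ℕ} (h : x + 1 < n) : T.Adj x (x + 1) := Or.inl (T.succ_mem x h)

lemma exists_isDegMonotonePath_of_triangle {x y u w : ℕ} (hxy : T.Adj x y) (hyu : T.Adj y u)
    (hyw : T.Adj y w) (huw : T.Adj u w) (hxu : x ≠ u) (hxw : x ≠ w) (hyu' : y ≠ u) (hyw' : y ≠ w)
    (hx : T.deg x ≤ T.deg y) (hu : T.deg y ≤ T.deg u) (hw : T.deg y ≤ T.deg w) :
    ∃ a b c d, T.IsDegMonotonePath a b c d := by
  rcases le_total (T.deg u) (T.deg w) with h | h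
  · exact ⟨x, y, u, w, hxy, hyu, huw, hxu, hxw, hyw', hx, hu, h⟩
  · exact ⟨x, y, w, u, hxy, hyw, huw.symm, hxw, hxu, hyu', hx, hw, h⟩

lemma exists_isDegMonotonePath_of_apex_succ {a : ℕ} (hab : (a, a + 3) ∈ T.chords)
    (he : (a + 1, a + 3) ∈ T.edges) : ∃ p q r s, T.IsDegMonotonePath p q r s := by
  have hE := (mk_mem_chords.1 hab).1
  have hn := lt_of_mk_mem hE
  have hc : (a + 1, a + 3) ∈ T.chords := mk_mem_chords.2 ⟨he, by omega, by omega⟩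
  have h2 : T.deg (a + 2) = 2 := T.deg_succ_eq_two he
  have h1 : T.deg (a + 1) ≤ 2 + #{(a + 1, a + 3)} := T.deg_le (by omega) fun ⟨p, q⟩ hpq hx => by
    rw [mk_mem_chords] at hpq
    have := T.noncross _ hE _ hpq.1
    have := T.noncross _ hpq.1 _ hE
    simp only [mem_singleton, Prod.mk.injEq] at *
    omega
  have h1' := T.three_le_deg (x := a + 1) hc (Or.inl rfl)
  have ha := T.three_le_deg (x := a) hab (Or.inl rfl)
  have hb := T.three_le_deg (x := a + 3) hab (Or.inr rfl)
  rw [card_singleton] at h1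
  exact T.exists_isDegMonotonePath_of_triangle (x := a + 2) (y := a + 1) (u := a) (w := a + 3)
    (T.adj_succ (by omega)).symm (T.adj_succ (by omega)).symm (Or.inl he) (Or.inl hE)
    (by omega) (by omega) (by omega) (by omega) (by omega) (by omega) (by omega)

lemma exists_isDegMonotonePath_of_apex_add_two {a : ℕ} (hab : (a, a + 3) ∈ T.chords)
    (he : (a, a + 2) ∈ T.edges) : ∃ p q r s, T.IsDegMonotonePath p q r s := by
  have hE := (mk_mem_chords.1 hab).1
  have hn := lt_of_mk_mem hE
  have hc : (a, a + 2) ∈ T.chords := mk_mem_chords.2 ⟨he, by omega, by omega⟩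
  have h1 := T.deg_succ_eq_two he
  have h2 : T.deg (a + 2) ≤ 2 + #{(a, a + 2)} := T.deg_le (by omega) fun ⟨p, q⟩ hpq hx => by
    rw [mk_mem_chords] at hpq
    have := T.noncross _ hE _ hpq.1
    have := T.noncross _ hpq.1 _ hE
    simp only [mem_singleton, Prod.mk.injEq] at *
    omega
  have h2' := T.three_le_deg (x := a + 2) hc (Or.inr rfl)
  have ha := T.three_le_deg (x := a) hab (Or.inl rfl)
  have hb := T.three_le_deg (x := a + 3) hab (Or.inr rfl)
  rw [card_singleton] at h2
  exact T.exists_isDegMonotonePath_of_triangle (x := a + 1) (y := a + 2) (u := a) (w := a + 3)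
    (T.adj_succ (by omega)) (Or.inr he) (T.adj_succ (by omega)) (Or.inl hE)
    (by omega) (by omega) (by omega) (by omega) (by omega) (by omega) (by omega)

lemma exists_isDegMonotonePath_of_pentagon {a : ℕ} (hab : (a, a + 4) ∈ T.chords)
    (hl : (a, a + 2) ∈ T.edges) (hr : (a + 2, a + 4) ∈ T.edges) :
    ∃ p q r s, T.IsDegMonotonePath p q r s := by
  have hE := (mk_mem_chords.1 hab).1
  have hn := lt_of_mk_mem hE
  have hlc : (a, a + 2) ∈ T.chords := mk_mem_chords.2 ⟨hl, by omega, by omega⟩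
  have hrc : (a + 2, a + 4) ∈ T.chords := mk_mem_chords.2 ⟨hr, by omega, by omega⟩
  have h1 := T.deg_succ_eq_two hl
  have h2 : T.deg (a + 2) ≤ 2 + #{(a, a + 2), (a + 2, a + 4)} :=
    T.deg_le (by omega) fun ⟨p, q⟩ hpq hx => by
      rw [mk_mem_chords] at hpq
      have := T.noncross _ hE _ hpq.1
      have := T.noncross _ hpq.1 _ hE
      simp only [mem_insert, mem_singleton, Prod.mk.injEq] at *
      omega
  have ha := T.four_le_deg (x := a) (by simp) hlc hab (Or.inl rfl) (Or.inl rfl)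
  have hb := T.four_le_deg (x := a + 4) (by simp) hrc hab (Or.inr rfl) (Or.inr rfl)
  have h2' := T.three_le_deg (x := a + 2) hlc (Or.inr rfl)
  rw [card_pair (by simp)] at h2
  exact T.exists_isDegMonotonePath_of_triangle (x := a + 1) (y := a + 2) (u := a) (w := a + 4)
    (T.adj_succ (by omega)) (Or.inr hl) (Or.inl hr) (Or.inl hE)
    (by omega) (by omega) (by omega) (by omega) (by omega) (by omega) (by omega)

lemma IsTriangulatedOn.exists_isDegMonotonePath {a b : ℕ} (h : T.IsTriangulatedOn a b)
    (hab : (a, b) ∈ T.chords) (h3 : a + 3 ≤ b) : ∃ p q r s, T.IsDegMonotonePath p q r s := by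
  induction hm : b - a using Nat.strong_induction_on generalizing a b with
  | _ m ih =>
  obtain ⟨t, hat, htb, hl, hr⟩ := h.exists_apex (by omega)
  have hbn := (lt_of_mk_mem (mk_mem_chords.1 hab).1).2
  by_cases hL : a + 3 ≤ t
  · exact ih (t - a) (by omega) hl (mk_mem_chords.2 ⟨hl.mem_edges, by omega, by omega⟩) hL rfl
  by_cases hR : t + 3 ≤ b
  · exact ih (b - t) (by omega) hr (mk_mem_chords.2 ⟨hr.mem_edges, by omega, by omega⟩) hR rfl
  obtain ⟨rfl, rfl⟩ | ⟨rfl, rfl⟩ | ⟨rfl, rfl⟩ :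
      (t = a + 1 ∧ b = a + 3) ∨ (t = a + 2 ∧ b = a + 3) ∨ (t = a + 2 ∧ b = a + 4) := by omega
  · exact T.exists_isDegMonotonePath_of_apex_succ hab hr.mem_edges
  · exact T.exists_isDegMonotonePath_of_apex_add_two hab hl.mem_edges
  · exact T.exists_isDegMonotonePath_of_pentagon hab hl.mem_edges hr.mem_edges

lemma exists_isDegMonotonePath (hn : 6 ≤ n) : ∃ p q r s, T.IsDegMonotonePath p q r s := by
  obtain ⟨t, ht0, htn, hl, hr⟩ := T.isTriangulatedOn_zero_last.exists_apex (by omega)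
  by_cases ht : 3 ≤ t
  · exact hl.exists_isDegMonotonePath (mk_mem_chords.2 ⟨hl.mem_edges, by omega, by omega⟩) ht
  · exact hr.exists_isDegMonotonePath (mk_mem_chords.2 ⟨hr.mem_edges, by omega, by omega⟩)
      (by omega)

end PolygonTriangulation

section EdgePairs

lemma sum_card_filter_incident {n : ℕ} {E : Finset (ℕ × ℕ)} (hE : ∀ e ∈ E, e.1 < e.2 ∧ e.2 < n) :
    ∑ x ∈ range n, #{e ∈ E | e.1 = x ∨ e.2 = x} = 2 * #E := by
  simp_rw [card_filter]
  rw [sum_comm, card_eq_sum_ones, mul_sum]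
  refine sum_congr rfl fun e he => ?_
  have := hE e he
  rw [← card_filter, filter_or, card_union_of_disjoint, filter_eq, filter_eq]
  · simp [show e.1 < n by omega, this.2]
  · rw [disjoint_filter]; omega

variable {n : ℕ} (G : SimpleGraph (Fin n))

open Classical in
noncomputable def edgePairs : Finset (ℕ × ℕ) :=
  (univ.filter fun e : Fin n × Fin n => e.1 < e.2 ∧ G.Adj e.1 e.2).image
    fun e => ((e.1 : ℕ), (e.2 : ℕ))

variable {G}

lemma mem_edgePairs {e : ℕ × ℕ} :
    e ∈ edgePairs G ↔ ∃ x y : Fin n, x < y ∧ G.Adj x y ∧ ((x : ℕ), (y : ℕ)) = e := by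
  simp [edgePairs, and_assoc]

lemma mk_mem_edgePairs {x y : Fin n} : ((x : ℕ), (y : ℕ)) ∈ edgePairs G ↔ x < y ∧ G.Adj x y := by
  rw [mem_edgePairs]
  constructor
  · rintro ⟨x', y', hlt, hadj, he⟩
    simp only [Prod.mk.injEq] at he
    obtain rfl := Fin.ext he.1
    obtain rfl := Fin.ext he.2
    exact ⟨hlt, hadj⟩
  · rintro ⟨hlt, hadj⟩
    exact ⟨x, y, hlt, hadj, rfl⟩

lemma lt_of_mem_edgePairs {e : ℕ × ℕ} (he : e ∈ edgePairs G) : e.1 < e.2 ∧ e.2 < n := by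
  obtain ⟨x, y, hlt, -, rfl⟩ := mem_edgePairs.1 he
  exact ⟨hlt, y.isLt⟩

lemma gdeg_eq_card_filter (x : Fin n) :
    gdeg G x = #{e ∈ edgePairs G | e.1 = (x : ℕ) ∨ e.2 = (x : ℕ)} := by
  classical
  have hN : G.neighborSet x = ↑(univ.filter (G.Adj x)) := by ext; simp
  rw [gdeg, hN, Set.ncard_coe_finset]
  refine card_bij (fun y _ => (min (x : ℕ) y, max (x : ℕ) y)) ?_ ?_ ?_
  · intro y hy
    rw [mem_filter] at hy ⊢
    have hne : (x : ℕ) ≠ y := fun h => hy.2.ne (Fin.ext h)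
    refine ⟨?_, by omega⟩
    rcases lt_or_gt_of_ne hne with h | h
    · rw [min_eq_left h.le, max_eq_right h.le]
      exact mk_mem_edgePairs.2 ⟨h, hy.2⟩
    · rw [min_eq_right h.le, max_eq_left h.le]
      exact mk_mem_edgePairs.2 ⟨h, hy.2.symm⟩
  · intro y hy y' hy' h
    rw [mem_filter] at hy hy'
    have hne : (x : ℕ) ≠ y := fun h => hy.2.ne (Fin.ext h)
    have hne' : (x : ℕ) ≠ y' := fun h => hy'.2.ne (Fin.ext h)
    simp only [Prod.mk.injEq] at h
    exact Fin.ext (by omega)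
  · intro e he
    rw [mem_filter] at he
    obtain ⟨a, b, hab, hadj, rfl⟩ := mem_edgePairs.1 he.1
    have hab' : (a : ℕ) < b := hab
    rcases he.2 with h | h
    · obtain rfl := Fin.ext h
      exact ⟨b, by simp [hadj], by simp only [Prod.mk.injEq]; omega⟩
    · obtain rfl := Fin.ext h
      exact ⟨a, by simp [hadj.symm], by simp only [Prod.mk.injEq]; omega⟩

lemma card_edgePairs : #(edgePairs G) = G.edgeSet.ncard := by
  classical
  have h := G.sum_degrees_eq_twice_card_edges
  have hsum : ∑ x : Fin n, gdeg G x = 2 * #(edgePairs G) := by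
    simp_rw [gdeg_eq_card_filter]
    rw [Fin.sum_univ_eq_sum_range (fun i => #{e ∈ edgePairs G | e.1 = i ∨ e.2 = i})]
    exact sum_card_filter_incident fun e he => lt_of_mem_edgePairs he
  have hdeg : ∀ x : Fin n, G.degree x = gdeg G x := fun x => by
    rw [gdeg, ← card_neighborSet_eq_degree, Set.ncard_eq_toFinset_card', Set.toFinset_card]
  simp_rw [hdeg] at h
  rw [Set.ncard_eq_toFinset_card', ← edgeFinset]
  omega

end EdgePairs

section DegreeMonotonePaths

lemma List.IsChain.exists_rel_of_pairwise_le {α β : Type*} [PartialOrder β] {R : α → α → Prop}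
    {f : α → β} {u v : α} : ∀ {l : List α}, l.IsChain R → l.Pairwise (fun a b => f a ≤ f b) →
      u ∈ l → v ∈ l → u ≠ v → f u = f v → ∃ x y, R x y ∧ f x = f u ∧ f y = f u
  | [], _, _, hu, _, _, _ => absurd hu List.not_mem_nil
  | [_], _, _, hu, hv, huv, _ => by
    rw [List.mem_singleton] at hu hv
    exact absurd (hu.trans hv.symm) huv
  | a :: b :: l, hc, hp, hu, hv, huv, hf => by
    rw [List.isChain_cons_cons] at hc
    rw [List.pairwise_cons] at hp
    have hb : ∀ z ∈ b :: l, f b ≤ f z := by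
      intro z hz
      rcases List.mem_cons.1 hz with rfl | hz
      exacts [le_rfl, (List.pairwise_cons.1 hp.2).1 z hz]
    have hab := hp.1 b List.mem_cons_self
    rcases List.mem_cons.1 hu with rfl | hu'
    · have hv' := (List.mem_cons.1 hv).resolve_left (Ne.symm huv)
      exact ⟨u, b, hc.1, rfl, le_antisymm (hf ▸ hb v hv') hab⟩
    rcases List.mem_cons.1 hv with rfl | hv'
    · exact ⟨v, b, hc.1, hf.symm, le_antisymm (hb u hu') (hf ▸ hab)⟩
    · exact hc.2.exists_rel_of_pairwise_le hp.2 hu' hv' huv hf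

variable {V : Type*} [Fintype V] {G : SimpleGraph V}

lemma le_mp {u v : V} {p : G.Walk u v} (hp : p.IsPath) (hm : DegMonotone G p) :
    p.support.length ≤ mp G :=
  le_csSup ⟨Fintype.card V, by
    rintro _ ⟨_, _, q, hq, -, rfl⟩
    exact hq.support_nodup.length_le_card⟩ ⟨u, v, p, hp, hm, rfl⟩

lemma four_le_mp_of_adj {a b c d : V} (hab : G.Adj a b) (hbc : G.Adj b c) (hcd : G.Adj c d)
    (hac : a ≠ c) (had : a ≠ d) (hbd : b ≠ d)
    (h₁ : gdeg G a ≤ gdeg G b) (h₂ : gdeg G b ≤ gdeg G c) (h₃ : gdeg G c ≤ gdeg G d) :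
    4 ≤ mp G := by
  let p : G.Walk a d := .cons hab (.cons hbc (.cons hcd .nil))
  have hp : p.IsPath := by simp [p, Walk.isPath_def, hab.ne, hbc.ne, hcd.ne, hac, had, hbd]
  exact le_mp hp (Or.inl (show List.IsChain _ _ by simp [p, h₁, h₂, h₃]))

lemma mp_le_card_sub_one {u v : V} (huv : u ≠ v) (hdeg : gdeg G u = gdeg G v)
    (hnadj : ∀ x y, gdeg G x = gdeg G u → gdeg G y = gdeg G u → ¬G.Adj x y) :
    mp G ≤ Fintype.card V - 1 := by
  classical
  refine csSup_le' ?_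
  rintro _ ⟨a, b, p, hp, hm, rfl⟩
  have hnodup := hp.support_nodup
  have hle := hnodup.length_le_card
  by_contra hlen
  have hall : p.support.toFinset = univ :=
    eq_univ_of_card _ (by rw [List.toFinset_card_of_nodup hnodup]; omega)
  have hu : u ∈ p.support := by simp [← List.mem_toFinset, hall]
  have hv : v ∈ p.support := by simp [← List.mem_toFinset, hall]
  obtain ⟨x, y, hxy, hx, hy⟩ : ∃ x y, G.Adj x y ∧ gdeg G x = gdeg G u ∧ gdeg G y = gdeg G u := by
    rcases hm with hm | hm
    · exact p.isChain_adj_support.exists_rel_of_pairwise_le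
        (List.pairwise_map.1 hm.pairwise) hu hv huv hdeg
    · -- decreasing degrees are increasing in `ℕᵒᵈ`
      exact p.isChain_adj_support.exists_rel_of_pairwise_le
        (f := fun z => OrderDual.toDual (gdeg G z)) (List.pairwise_map.1 hm.pairwise)
        hu hv huv hdeg
  exact hnadj x y hx hy hxy

end DegreeMonotonePaths

namespace IsMOP

variable {n : ℕ} {G : SimpleGraph (Fin n)} (hG : IsMOP G)
include hG

noncomputable def triangulation : PolygonTriangulation n where
  edges := edgePairs G
  three_le := hG.three_le
  lt_of_mem _ := lt_of_mem_edgePairs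
  succ_mem i hi :=
    mk_mem_edgePairs (x := ⟨i, by omega⟩) (y := ⟨i + 1, hi⟩) |>.2
      ⟨Fin.mk_lt_mk.2 (by omega), hG.cycle _ _ (Nat.mod_eq_of_lt hi).symm⟩
  zero_last_mem := by
    have hn := hG.three_le
    refine mk_mem_edgePairs (x := ⟨0, by omega⟩) (y := ⟨n - 1, by omega⟩) |>.2
      ⟨Fin.mk_lt_mk.2 (by omega), (hG.cycle _ _ ?_).symm⟩
    simp [Nat.sub_add_cancel (by omega : 1 ≤ n)]
  noncross e he f hf h := by
    obtain ⟨a, c, hac, hadj, rfl⟩ := mem_edgePairs.1 he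
    obtain ⟨b, d, hbd, hadj', rfl⟩ := mem_edgePairs.1 hf
    exact hG.noncross a b c d h.1 h.2.1 h.2.2 hadj hadj'
  card_edges := by
    rw [card_edgePairs, hG.card_edges]
    have := hG.three_le
    omega

lemma gdeg_eq_deg (x : Fin n) : gdeg G x = hG.triangulation.deg x :=
  gdeg_eq_card_filter x

lemma triangulation_adj {x y : Fin n} : hG.triangulation.Adj x y ↔ G.Adj x y := by
  change ((x : ℕ), (y : ℕ)) ∈ edgePairs G ∨ ((y : ℕ), (x : ℕ)) ∈ edgePairs G ↔ _
  rw [mk_mem_edgePairs, mk_mem_edgePairs]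
  constructor
  · rintro (⟨-, h⟩ | ⟨-, h⟩)
    exacts [h, h.symm]
  · intro h
    rcases lt_or_gt_of_ne h.ne with hlt | hlt
    exacts [Or.inl ⟨hlt, h⟩, Or.inr ⟨hlt, h.symm⟩]

lemma exists_two_gdeg_eq_two : ∃ u v : Fin n, u ≠ v ∧ gdeg G u = 2 ∧ gdeg G v = 2 := by
  obtain ⟨x, y, hxy, hy, hx2, hy2⟩ := hG.triangulation.exists_two_deg_eq_two
  exact ⟨⟨x, by omega⟩, ⟨y, hy⟩, by simp [Fin.ext_iff]; omega,
    (hG.gdeg_eq_deg _).trans hx2, (hG.gdeg_eq_deg _).trans hy2⟩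

lemma not_adj_of_gdeg_eq_two (hn : 4 ≤ n) {u v : Fin n} (hu : gdeg G u = 2) (hv : gdeg G v = 2) :
    ¬G.Adj u v := fun h => by
  have := hG.triangulation.three_le_deg_of_adj_of_deg_eq_two hn ((hG.gdeg_eq_deg u).symm.trans hu)
    (hG.triangulation_adj.2 h)
  rw [← hG.gdeg_eq_deg] at this
  omega

lemma four_le_mp (hn : 6 ≤ n) : 4 ≤ mp G := by
  obtain ⟨a, b, c, d, hab, hbc, hcd, hac, had, hbd, h₁, h₂, h₃⟩ :=
    hG.triangulation.exists_isDegMonotonePath hn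
  have ha := hab.lt_left
  have hb := hbc.lt_left
  have hc := hcd.lt_left
  have hd := hcd.symm.lt_left
  refine four_le_mp_of_adj (a := ⟨a, ha⟩) (b := ⟨b, hb⟩) (c := ⟨c, hc⟩) (d := ⟨d, hd⟩)
    (hG.triangulation_adj.1 hab) (hG.triangulation_adj.1 hbc) (hG.triangulation_adj.1 hcd)
    (by simpa [Fin.ext_iff]) (by simpa [Fin.ext_iff]) (by simpa [Fin.ext_iff]) ?_ ?_ ?_
  all_goals simpa only [hG.gdeg_eq_deg]

end IsMOP

/-- Every maximal outerplanar graph on `n ≥ 6` vertices satisfies `4 ≤ mp(G) ≤ n − 1`. -/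
theorem mop_mp_bounds {n : ℕ} (hn : 6 ≤ n) (G : SimpleGraph (Fin n)) (hG : IsMOP G) :
    4 ≤ mp G ∧ mp G ≤ n - 1 := by
  obtain ⟨u, v, huv, hu, hv⟩ := hG.exists_two_gdeg_eq_two
  refine ⟨hG.four_le_mp hn, ?_⟩
  simpa using mp_le_card_sub_one huv (hu.trans hv.symm) fun x y hx hy =>
    hG.not_adj_of_gdeg_eq_two (by omega) (hx.trans hu) (hy.trans hu)
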